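/- Let C be a covering of U. For any X ⊆ U, the union ⋃_{x∈X} N_C(x) is the smallest definable set with respect to C containing X. -/

import Mathlib

variable {α : Type*}

/-- `C` is a covering of `U`: every member is nonempty and their union is `U`. -/
def IsCovering (U : Set α) (C : Set (Set α)) : Prop :=
  (∀ K ∈ C, K.Nonempty) ∧ ⋃₀ C = U

/-- The neighborhood of `x`: intersection of all members of `C` containing `x`. -/
def nbhd (C : Set (Set α)) (x : α) : Set α :=
  ⋂₀ {K | K ∈ C ∧ x ∈ K}

/-- `X` is definable w.r.t. `C` if it is the union of the neighborhoods of its points. -/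
def Definable (C : Set (Set α)) (X : Set α) : Prop :=
  X = ⋃ x ∈ X, nbhd C x

/-- The family of all definable subsets of `U` w.r.t. `C`. -/
def DefinableSets (U : Set α) (C : Set (Set α)) : Set (Set α) :=
  {X | X ⊆ U ∧ Definable C X}

/-- Covering-based lower approximation. -/
def lowerApprox (U : Set α) (C : Set (Set α)) (X : Set α) : Set α :=
  {x ∈ U | nbhd C x ⊆ X}

/-- Covering-based upper approximation. -/
def upperApprox (U : Set α) (C : Set (Set α)) (X : Set α) : Set α :=
  {x ∈ U | (nbhd C x ∩ X).Nonempty}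

/-- Rough matroid based on a covering `C` of `U`. -/
def RoughMatroid (U : Set α) (C : Set (Set α)) (I : Set (Set α)) : Prop :=
  I ⊆ DefinableSets U C ∧
  ∅ ∈ I ∧
  (∀ I₀ ∈ I, ∀ I', I' ⊆ I₀ → I' ∈ DefinableSets U C → I' ∈ I) ∧
  (∀ I₁ ∈ I, ∀ I₂ ∈ I, I₁.ncard < I₂.ncard →
    ∃ I₀ ∈ I, I₁ ⊂ I₀ ∧ I₀ ⊆ I₁ ∪ I₂)

/-- Matroid independence axioms (I1)-(I3). -/
def MatroidInd (I : Set (Set α)) : Prop :=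
  ∅ ∈ I ∧
  (∀ X ∈ I, ∀ Y, Y ⊆ X → Y ∈ I) ∧
  (∀ I₁ ∈ I, ∀ I₂ ∈ I, I₁.ncard < I₂.ncard →
    ∃ e ∈ I₂ \ I₁, insert e I₁ ∈ I)


/-! The key fact is that `y ∈ N_C(x)` implies `N_C(y) ⊆ N_C(x)`: every block containing `x`
also contains `y`. Hence a union of neighbourhoods absorbs the neighbourhoods of its points, and
a definable set containing `X` contains the neighbourhood of every point of `X`. -/

section Nbhd

variable {C : Set (Set α)}

lemma mem_nbhd_self (C : Set (Set α)) (x : α) : x ∈ nbhd C x :=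
  fun _ hK => hK.2

lemma nbhd_subset_nbhd_of_mem {x y : α} (h : y ∈ nbhd C x) : nbhd C y ⊆ nbhd C x :=
  fun _ hz K hK => hz K ⟨hK.1, h K hK⟩

lemma nbhd_subset_sUnion_of_mem {x : α} (hx : x ∈ ⋃₀ C) : nbhd C x ⊆ ⋃₀ C := by
  obtain ⟨K, hK, hxK⟩ := hx
  exact fun _ hz => ⟨K, hK, hz K ⟨hK, hxK⟩⟩

lemma subset_biUnion_nbhd (C : Set (Set α)) (X : Set α) : X ⊆ ⋃ x ∈ X, nbhd C x :=
  fun x hx => Set.mem_biUnion hx (mem_nbhd_self C x)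

lemma biUnion_nbhd_subset_sUnion {X : Set α} (hX : X ⊆ ⋃₀ C) :
    (⋃ x ∈ X, nbhd C x) ⊆ ⋃₀ C :=
  Set.iUnion₂_subset fun _ hx => nbhd_subset_sUnion_of_mem (hX hx)

lemma definable_biUnion_nbhd (C : Set (Set α)) (X : Set α) :
    Definable C (⋃ x ∈ X, nbhd C x) := by
  refine (subset_biUnion_nbhd C _).antisymm (Set.iUnion₂_subset fun y hy => ?_)
  obtain ⟨x, hx, hyx⟩ := Set.mem_iUnion₂.1 hy
  exact (nbhd_subset_nbhd_of_mem hyx).trans (Set.subset_biUnion_of_mem hx)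

lemma Definable.biUnion_nbhd_subset {X Y : Set α} (hY : Definable C Y) (hXY : X ⊆ Y) :
    (⋃ x ∈ X, nbhd C x) ⊆ Y := by
  rw [hY]
  exact Set.biUnion_subset_biUnion_left hXY

end Nbhd

theorem nbhd_union_smallest_definable_general {U : Set α} {C : Set (Set α)}
    (hC : IsCovering U C) {X : Set α} (hX : X ⊆ U) :
    (⋃ x ∈ X, nbhd C x) ∈ DefinableSets U C ∧
    X ⊆ ⋃ x ∈ X, nbhd C x ∧
    ∀ Y ∈ DefinableSets U C, X ⊆ Y → (⋃ x ∈ X, nbhd C x) ⊆ Y := by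
  obtain ⟨-, hCU⟩ := hC
  subst hCU
  exact ⟨⟨biUnion_nbhd_subset_sUnion hX, definable_biUnion_nbhd C X⟩,
    subset_biUnion_nbhd C X, fun Y hY hXY => hY.2.biUnion_nbhd_subset hXY⟩

theorem nbhd_union_smallest_definable {U : Set α} {C : Set (Set α)} (hU : U.Finite)
    (hC : IsCovering U C) {X : Set α} (hX : X ⊆ U) :
    (⋃ x ∈ X, nbhd C x) ∈ DefinableSets U C ∧
    X ⊆ ⋃ x ∈ X, nbhd C x ∧
    ∀ Y ∈ DefinableSets U C, X ⊆ Y → (⋃ x ∈ X, nbhd C x) ⊆ Y :=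
  nbhd_union_smallest_definable_general hC hX
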